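/- arXiv:1911.12898 — 3 statements merged into one kernel-verified Lean document; each statement's English description precedes it below -/
import Mathlib

section
/- For a Gamma(m_P, λ_P) random variable X with m_P a positive integer, and positive constants c, γ̄ and nonnegative integer n, the integral ∫_0^∞ f_X(x) Φ(x)^{-n} e^{-c/Φ(x)} dx, where Φ(x) = γ̄_S for x ≤ γ̄/γ̄_S and Φ(x) = γ̄/x otherwise, equals (1/Γ(m_P))·[γ̄_S^{-n} e^{-c/γ̄_S} γ(m_P, λ_P γ̄/γ̄_S) + γ̄^{-n} λ_P^{m_P} Γ(m_P + n, λ_P γ̄/γ̄_S + c/γ̄_S)/(λ_P + c/γ̄)^{m_P+n}]. -/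
open MeasureTheory Real Set

/-!
Split the integral at `b = γ̄/γ̄_S`. On `(0, b]` the weight `Φ` is the constant `γ̄_S`, leaving a
multiple of `∫₀^b x^(m-1) e^(-λx) dx`; on `(b, ∞)` we have `Φ x = γ̄/x`, so the integrand becomes a
multiple of `x^(m+n-1) e^(-(λ + c/γ̄) x)`. The substitutions `t = λx` and `t = (λ + c/γ̄) x` turn
these into the lower and upper incomplete gamma integrals of the claim.
-/

theorem integral_Ioi_eq_of_eqOn_Icc_Ioi {E : Type*} [NormedAddCommGroup E] [NormedSpace ℝ E]
    {f g h : ℝ → E} {a b : ℝ} (hab : a ≤ b) (hg : IntervalIntegrable g volume a b)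
    (hh : IntegrableOn h (Ioi b)) (hfg : EqOn f g (Icc a b)) (hfh : EqOn f h (Ioi b)) :
    ∫ x in Ioi a, f x = (∫ x in a..b, g x) + ∫ x in Ioi b, h x := by
  have hfg' : EqOn f g (uIcc a b) := by rwa [uIcc_of_le hab]
  have hf₁ : IntervalIntegrable f volume a b :=
    hg.congr fun x hx => (hfg' (uIoc_subset_uIcc hx)).symm
  have hf₂ : IntegrableOn f (Ioi b) := hh.congr_fun hfh.symm measurableSet_Ioi
  rw [← intervalIntegral.integral_interval_add_Ioi' hf₁ hf₂, intervalIntegral.integral_congr hfg',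
    setIntegral_congr_fun measurableSet_Ioi hfh]

theorem integrableOn_Ioi_pow_mul_exp_neg_mul (k : ℕ) {a b : ℝ} (ha : 0 < a) (hb : 0 ≤ b) :
    IntegrableOn (fun x : ℝ => x ^ k * exp (-(a * x))) (Ioi b) := by
  have h := integrableOn_rpow_mul_exp_neg_mul_rpow (p := 1) (s := k)
    (neg_one_lt_zero.trans_le k.cast_nonneg) zero_lt_one ha
  simp only [rpow_one, rpow_natCast, neg_mul] at h
  exact h.mono_set (Ioi_subset_Ioi hb)

theorem intervalIntegral_pow_mul_exp_neg_mul_eq (k : ℕ) (a b : ℝ) :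
    ∫ t in (0:ℝ)..a * b, t ^ k * exp (-t) =
      a ^ (k + 1) * ∫ x in (0:ℝ)..b, x ^ k * exp (-(a * x)) := by
  have h := intervalIntegral.smul_integral_comp_mul_left (fun t : ℝ => t ^ k * exp (-t)) a
    (a := 0) (b := b)
  simp only [mul_zero, mul_pow, mul_assoc, intervalIntegral.integral_const_mul, smul_eq_mul] at h
  rw [← h]
  ring

theorem integral_Ioi_pow_mul_exp_neg_mul_eq (k : ℕ) {a : ℝ} (ha : 0 < a) (b : ℝ) :
    ∫ t in Ioi (a * b), t ^ k * exp (-t) =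
      a ^ (k + 1) * ∫ x in Ioi b, x ^ k * exp (-(a * x)) := by
  have h := integral_comp_mul_left_Ioi (fun t : ℝ => t ^ k * exp (-t)) b ha
  simp only [mul_pow, mul_assoc, integral_const_mul, smul_eq_mul] at h
  rw [eq_inv_mul_iff_mul_eq₀ ha.ne'] at h
  rw [← h]
  ring

theorem exp_neg_mul_mul_exp_neg_div_div_pow (l c g x : ℝ) (n : ℕ) :
    exp (-(l * x)) * exp (-(c / (g / x))) / (g / x) ^ n =
      x ^ n / g ^ n * exp (-((l + c / g) * x)) := by
  rw [div_pow, div_div_eq_mul_div _ (g ^ n), div_div_eq_mul_div c, mul_div_right_comm c x g,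
    add_mul, neg_add, exp_add]
  ring

/-- For `X ~ Gamma(m_P, λ_P)` and `Φ(x) = γ̄_S` for `x ≤ γ̄/γ̄_S`,
`Φ(x) = γ̄/x` otherwise, the integral `∫_0^∞ f_X(x) Φ(x)^{-n} e^{-c/Φ(x)} dx` equals
`(1/Γ(m_P))·[γ̄_S^{-n} e^{-c/γ̄_S} γ(m_P, λ_P γ̄/γ̄_S)
  + γ̄^{-n} λ_P^{m_P} Γ(m_P + n, λ_P γ̄/γ̄_S + c/γ̄_S)/(λ_P + c/γ̄)^{m_P+n}]`. -/
theorem gamma_weighted_phi_integral (mP : ℕ) (hmP : 0 < mP) (lamP gS gbar c : ℝ)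
    (hlamP : 0 < lamP) (hgS : 0 < gS) (hgbar : 0 < gbar) (hc : 0 < c)
    (n : ℕ) (Φ : ℝ → ℝ) (hΦ : ∀ x, Φ x = if x ≤ gbar / gS then gS else gbar / x) :
    (∫ x in Ioi (0:ℝ),
        (lamP ^ mP / (Nat.factorial (mP - 1))) * x ^ (mP - 1) * Real.exp (-(lamP * x)) *
          Real.exp (-(c / Φ x)) / (Φ x) ^ n) =
      (1 / (Nat.factorial (mP - 1) : ℝ)) *
        (Real.exp (-(c / gS)) / gS ^ n *
            (∫ t in (0:ℝ)..(lamP * gbar / gS), t ^ (mP - 1) * Real.exp (-t)) +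
          lamP ^ mP / gbar ^ n *
            (∫ t in Ioi (lamP * gbar / gS + c / gS), t ^ (mP + n - 1) * Real.exp (-t)) /
            (lamP + c / gbar) ^ (mP + n)) := by
  set b := gbar / gS with hb_def
  have hb : 0 ≤ b := by positivity
  set a := lamP + c / gbar with ha_def
  have ha : 0 < a := by positivity
  set K : ℝ := lamP ^ mP / (Nat.factorial (mP - 1)) with hK
  rw [integral_Ioi_eq_of_eqOn_Icc_Ioi hb
      (g := fun x => K * exp (-(c / gS)) / gS ^ n * (x ^ (mP - 1) * exp (-(lamP * x))))
      (h := fun x => K / gbar ^ n * (x ^ (mP + n - 1) * exp (-(a * x))))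
      ((by fun_prop : Continuous _).intervalIntegrable _ _)
      ((integrableOn_Ioi_pow_mul_exp_neg_mul _ ha hb).const_mul _) ?below ?above,
    intervalIntegral.integral_const_mul, integral_const_mul,
    show lamP * gbar / gS = lamP * b by ring, intervalIntegral_pow_mul_exp_neg_mul_eq,
    show lamP * b + c / gS = a * b by rw [ha_def, hb_def]; field_simp,
    integral_Ioi_pow_mul_exp_neg_mul_eq _ ha, Nat.sub_add_cancel hmP,
    Nat.sub_add_cancel (by omega : 1 ≤ mP + n), hK]
  · field_simp
  case below =>
    intro x hx
    dsimp only
    rw [hΦ, if_pos hx.2]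
    ring
  case above =>
    intro x hx
    dsimp only
    rw [hΦ, if_neg (not_le.mpr hx)]
    calc _ = K * x ^ (mP - 1) *
            (exp (-(lamP * x)) * exp (-(c / (gbar / x))) / (gbar / x) ^ n) := by ring
      _ = K * x ^ (mP - 1) * (x ^ n / gbar ^ n * exp (-(a * x))) := by
            rw [exp_neg_mul_mul_exp_neg_div_div_pow]
      _ = K / gbar ^ n * (x ^ (mP + n - 1) * exp (-(a * x))) := by
            rw [show mP + n - 1 = mP - 1 + n by omega, pow_add]; ring
end

section
/- For a > 0, b > 0, nonnegative integers h and a positive integer m, ∫_0^∞ t^h e^{-at} γ(m, bt) dt = a^{-(h+1)} [Γ(m) h! - ∑ₖ₌₀^{m-1} (b^k/k!) · Γ(h+k+1)·a^{h+1}/(a+b)^{h+k+1}]; equivalently, ∫_0^∞ t^h e^{-at} γ(m, bt) dt = (Γ(m) h!/a^{h+1}) - ∑_{k=0}^{m-1} (b^k (h+k)! (m-1)!)/(k! (a+b)^{h+k+1}). -/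
open MeasureTheory Real Set Finset

open scoped Nat

/-!
For integer order, `γ(n + 1, x) = n! (1 - e⁻ˣ eₙ(x))` with `eₙ(x) = ∑_{k ≤ n} xᵏ / k!`; differentiate,
using `eₙ' = eₙ₋₁ = eₙ - xⁿ / n!`. Substituting this at `x = b t` turns the integrand into a finite
combination of functions `tᵖ e^{-c t}` with `c = a` or `c = a + b`, and each of these integrates over
`(0, ∞)` to `p! / c^{p+1}` by the Gamma integral.
-/

lemma integral_pow_mul_exp_neg_mul_Ioi (k : ℕ) {c : ℝ} (hc : 0 < c) :
    ∫ t in Ioi (0 : ℝ), t ^ k * exp (-(c * t)) = k ! / c ^ (k + 1) := by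
  have key := integral_rpow_mul_exp_neg_mul_Ioi (a := k + 1) (by positivity) hc
  simp_rw [add_sub_cancel_right, rpow_natCast, Gamma_nat_eq_factorial] at key
  rw [key, ← Nat.cast_add_one, rpow_natCast, div_pow, one_pow, one_div_mul_eq_div]

lemma integrableOn_pow_mul_exp_neg_mul_Ioi (k : ℕ) {c : ℝ} (hc : 0 < c) :
    IntegrableOn (fun t : ℝ ↦ t ^ k * exp (-(c * t))) (Ioi 0) :=
  .of_integral_ne_zero (by rw [integral_pow_mul_exp_neg_mul_Ioi k hc]; positivity)

lemma hasDerivAt_sum_range_pow_div_factorial (n : ℕ) (x : ℝ) :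
    HasDerivAt (fun y : ℝ ↦ ∑ k ∈ range (n + 1), y ^ k / k !)
      (∑ k ∈ range n, x ^ k / k !) x := by
  induction n with
  | zero => simpa using hasDerivAt_const x (1 : ℝ)
  | succ n ih =>
    simp_rw [sum_range_succ _ (n + 1)]
    refine (ih.add ((hasDerivAt_pow (n + 1) x).div_const ((n + 1)! : ℝ))).congr_deriv ?_
    rw [sum_range_succ, Nat.factorial_succ]
    push_cast
    field_simp

lemma integral_pow_mul_exp_neg (n : ℕ) (x : ℝ) :
    ∫ s in (0 : ℝ)..x, s ^ n * exp (-s) =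
      n ! * (1 - exp (-x) * ∑ k ∈ range (n + 1), x ^ k / k !) := by
  have hderiv (y : ℝ) : HasDerivAt (fun y ↦ -(n ! * (exp (-y) * ∑ k ∈ range (n + 1), y ^ k / k !)))
      (y ^ n * exp (-y)) y := by
    refine (((hasDerivAt_neg y).exp.mul
      (hasDerivAt_sum_range_pow_div_factorial n y)).const_mul (n ! : ℝ)).neg.congr_deriv ?_
    rw [sum_range_succ]
    field_simp
    ring
  rw [intervalIntegral.integral_eq_sub_of_hasDerivAt (fun y _ ↦ hderiv y)
    ((by fun_prop : Continuous fun s : ℝ ↦ s ^ n * exp (-s)).intervalIntegrable 0 x)]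
  simp [sum_range_succ']
  ring

/-- For `a, b > 0`, nonnegative integer `h` and positive integer `m`,
`∫_0^∞ t^h e^{-at} γ(m, bt) dt
  = Γ(m) h!/a^{h+1} - ∑_{k=0}^{m-1} b^k (h+k)! (m-1)!/(k! (a+b)^{h+k+1})`. -/
theorem integral_poly_exp_lowerGamma (a b : ℝ) (ha : 0 < a) (hb : 0 < b)
    (h : ℕ) (m : ℕ) (hm : 0 < m) :
    (∫ t in Ioi (0:ℝ), t ^ h * Real.exp (-(a * t)) *
        ∫ s in (0:ℝ)..(b * t), s ^ (m - 1) * Real.exp (-s)) =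
      (Nat.factorial (m - 1) : ℝ) * (Nat.factorial h) / a ^ (h + 1) -
        ∑ k ∈ Finset.range m,
          b ^ k * (Nat.factorial (h + k)) * (Nat.factorial (m - 1)) /
            ((Nat.factorial k) * (a + b) ^ (h + k + 1)) := by
  obtain ⟨n, rfl⟩ := Nat.exists_eq_add_one_of_ne_zero hm.ne'
  have hab : 0 < a + b := by linarith
  have integrand (t : ℝ) : t ^ h * exp (-(a * t)) * ∫ s in (0 : ℝ)..b * t, s ^ n * exp (-s) =
      n ! * (t ^ h * exp (-(a * t))) -
        ∑ k ∈ range (n + 1), n ! * b ^ k / k ! * (t ^ (h + k) * exp (-((a + b) * t))) := by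
    simp only [integral_pow_mul_exp_neg, mul_sub, mul_one, mul_sum]
    congr 1
    · ring
    refine sum_congr rfl fun k _ ↦ ?_
    rw [add_mul, neg_add, exp_add, mul_pow, pow_add]
    ring
  have integrable (p : ℕ) {c : ℝ} (hc : 0 < c) (C : ℝ) :=
    (integrableOn_pow_mul_exp_neg_mul_Ioi p hc).const_mul C
  simp_rw [Nat.add_sub_cancel, integrand]
  rw [integral_sub (integrable h ha _) (integrable_finsetSum _ fun k _ ↦ integrable (h + k) hab _),
    integral_finsetSum _ fun k _ ↦ integrable (h + k) hab _, integral_const_mul,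
    integral_pow_mul_exp_neg_mul_Ioi h ha, mul_div_assoc]
  congr 1
  refine sum_congr rfl fun k _ ↦ ?_
  rw [integral_const_mul, integral_pow_mul_exp_neg_mul_Ioi (h + k) hab]
  field_simp
end

section
/- Let X ~ Gamma(m_c, λ_c) and Y ~ Gamma(m_e, λ_e) be independent with positive integer shapes, and γ > 1. Then P(X > γY + γ - 1) = e^{-λ_c(γ-1)} ∑_{l=0}^{m_c-1} (λ_c^l/l!) ∑_{j=0}^{l} C(l,j) (γ-1)^{l-j} γ^j · (λ_e^{m_e}/Γ(m_e)) ∫_0^∞ y^{j+m_e-1} e^{-(λ_cγ+λ_e)y} dy = e^{-λ_c(γ-1)} ∑_{l=0}^{m_c-1} ∑_{j=0}^{l} (λ_c^l/l!) C(l,j)(γ-1)^{l-j} γ^j λ_e^{m_e} Γ(j+m_e)/(Γ(m_e)(λ_cγ+λ_e)^{j+m_e}). -/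
open MeasureTheory ProbabilityTheory Real Set Finset Filter

lemma intOn_pow_exp {k : ℕ} {c : ℝ} (hc : 0 < c) (a : ℝ) :
    IntegrableOn (fun y : ℝ => y ^ k * Real.exp (-(c * y))) (Ioi a) := by
  apply integrable_of_isBigO_exp_neg (half_pos hc)
  · exact (continuous_pow k).continuousOn.mul (by fun_prop)
  · have h : Filter.Tendsto (fun x : ℝ => x ^ k * Real.exp (-(c/2) * x)) atTop (nhds 0) := by
      have := tendsto_rpow_mul_exp_neg_mul_atTop_nhds_zero (k : ℝ) (c/2) (half_pos hc)
      apply this.congr'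
      filter_upwards [eventually_gt_atTop (0:ℝ)] with x hx
      rw [Real.rpow_natCast]
    have hO : (fun x : ℝ => x ^ k * Real.exp (-(c/2) * x)) =O[atTop] (fun _ => (1:ℝ)) :=
      h.norm.isBoundedUnder_le.isBigO_one ℝ
    calc (fun y : ℝ => y ^ k * Real.exp (-(c * y)))
        = fun y : ℝ => (y ^ k * Real.exp (-(c/2) * y)) * Real.exp (-(c/2) * y) := by
          funext y; rw [mul_assoc, ← Real.exp_add]; ring_nf
      _ =O[atTop] fun y => 1 * Real.exp (-(c/2) * y) := hO.mul (Asymptotics.isBigO_refl _ _)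
      _ = fun y => Real.exp (-(c/2) * y) := by funext y; rw [one_mul]

lemma lap_int (k : ℕ) {c : ℝ} (hc : 0 < c) :
    ∫ y in Ioi (0:ℝ), y ^ k * Real.exp (-(c * y)) = (Nat.factorial k) / c ^ (k + 1) := by
  have h := integral_rpow_mul_exp_neg_mul_Ioi (a := (k : ℝ) + 1) (by positivity) hc
  rw [show ((k:ℝ) + 1 - 1) = (k:ℝ) by ring] at h
  rw [setIntegral_congr_fun measurableSet_Ioi
    (fun x hx => by rw [← Real.rpow_natCast x k] : ∀ x ∈ Ioi (0:ℝ),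
      x ^ k * Real.exp (-(c * x)) = x ^ (k:ℝ) * Real.exp (-(c * x))), h,
    Real.Gamma_nat_eq_factorial,
    show ((k:ℝ) + 1) = ((k + 1 : ℕ) : ℝ) by push_cast; ring,
    Real.rpow_natCast]
  rw [div_pow, one_pow, div_mul_eq_mul_div, one_mul]

lemma telescope (m : ℕ) (r x : ℝ) :
    r * ∑ l ∈ Finset.range (m+1), r ^ l * x ^ l / Nat.factorial l
      - ∑ l ∈ Finset.range (m+1), r ^ l * ((l : ℝ) * x ^ (l-1)) / Nat.factorial l
      = r ^ (m+1) * x ^ m / Nat.factorial m := by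
  rw [Finset.mul_sum, Finset.sum_range_succ (f := fun l => r * (r ^ l * x ^ l / Nat.factorial l)),
    Finset.sum_range_succ' (f := fun l => r ^ l * ((l:ℝ) * x ^ (l-1)) / Nat.factorial l)]
  have h : ∀ i ∈ Finset.range m, r ^ (i+1) * (((i+1:ℕ):ℝ) * x ^ (i+1-1)) / Nat.factorial (i+1)
      = r * (r ^ i * x ^ i / Nat.factorial i) := by
    intro i _
    rw [Nat.factorial_succ, Nat.add_sub_cancel]
    have h1 : (Nat.factorial i : ℝ) ≠ 0 := Nat.cast_ne_zero.mpr (Nat.factorial_ne_zero i)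
    push_cast
    field_simp
    ring
  rw [Finset.sum_congr rfl h]
  simp
  ring

lemma survival_real {n : ℕ} (hn : 0 < n) {r : ℝ} (hr : 0 < r) {t : ℝ} (ht : 0 ≤ t) :
    ∫ x in Ioi t, r ^ n / Nat.factorial (n-1) * x ^ (n-1) * Real.exp (-(r * x))
      = Real.exp (-(r * t)) * ∑ l ∈ Finset.range n, (r * t) ^ l / Nat.factorial l := by
  obtain ⟨m, rfl⟩ := Nat.exists_eq_succ_of_ne_zero hn.ne'
  simp only [Nat.succ_sub_one]
  set F : ℝ → ℝ := fun x => -(Real.exp (-(r*x)) * ∑ l ∈ Finset.range (m+1),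
    r ^ l * x ^ l / Nat.factorial l) with hF
  have hasDerivF : ∀ x : ℝ, HasDerivAt F (r ^ (m+1) / Nat.factorial m * x ^ m
      * Real.exp (-(r*x))) x := by
    intro x
    have hE : HasDerivAt (fun x : ℝ => Real.exp (-(r*x))) (-r * Real.exp (-(r*x))) x := by
      simpa [mul_comm] using (((hasDerivAt_id x).const_mul r).neg).exp
    have hP : HasDerivAt (fun x : ℝ => ∑ l ∈ Finset.range (m+1), r ^ l * x ^ l / Nat.factorial l)
        (∑ l ∈ Finset.range (m+1), r ^ l * ((l:ℝ) * x ^ (l-1)) / Nat.factorial l) x := by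
      apply HasDerivAt.fun_sum
      intro l _
      simpa [mul_div_assoc] using ((hasDerivAt_pow l x).const_mul (r ^ l)).div_const
        (Nat.factorial l : ℝ)
    have h := (hE.fun_mul hP).fun_neg
    refine h.congr_deriv ?_
    have h2 := telescope m r x
    rw [show r ^ (m+1) / (Nat.factorial m : ℝ) * x ^ m * Real.exp (-(r*x))
        = (r ^ (m+1) * x ^ m / Nat.factorial m) * Real.exp (-(r*x)) by ring, ← h2]
    ring
  have key : ∀ l : ℕ, Tendsto (fun x : ℝ => x ^ l * Real.exp (-(r*x))) atTop (nhds 0) := by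
    intro l
    have h := tendsto_rpow_mul_exp_neg_mul_atTop_nhds_zero (l : ℝ) r hr
    apply h.congr'
    filter_upwards [eventually_gt_atTop (0:ℝ)] with x hx
    rw [Real.rpow_natCast, neg_mul]
  have htend : Tendsto F atTop (nhds 0) := by
    have hsum : Tendsto (fun x : ℝ => ∑ l ∈ Finset.range (m+1),
        r ^ l / Nat.factorial l * (x ^ l * Real.exp (-(r*x)))) atTop (nhds 0) := by
      have h := tendsto_finset_sum (Finset.range (m+1))
        (fun l _ => ((key l).const_mul (r ^ l / (Nat.factorial l : ℝ))))
      simpa using h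
    have : F = fun x => -(∑ l ∈ Finset.range (m+1),
        r ^ l / Nat.factorial l * (x ^ l * Real.exp (-(r*x)))) := by
      funext x
      simp only [hF, Finset.mul_sum, neg_inj]
      apply Finset.sum_congr rfl
      intro l _
      ring
    rw [this, ← neg_zero]
    exact hsum.neg
  have hint : IntegrableOn (fun x : ℝ => r ^ (m+1) / Nat.factorial m * x ^ m
      * Real.exp (-(r*x))) (Ioi t) := by
    have h := (intOn_pow_exp (k := m) hr t).const_mul (r ^ (m+1) / (Nat.factorial m : ℝ))
    simpa [mul_assoc, IntegrableOn] using h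
  have hmain := integral_Ioi_of_hasDerivAt_of_tendsto' (f := F)
    (fun x _ => hasDerivF x) hint htend
  rw [hmain, hF]
  simp only [zero_sub, neg_neg]
  congr 1
  apply Finset.sum_congr rfl
  intro l _
  rw [mul_pow]

lemma survival_measure {n : ℕ} (hn : 0 < n) {r : ℝ} (hr : 0 < r) {t : ℝ} (ht : 0 ≤ t) :
    gammaMeasure n r (Ioi t) = ENNReal.ofReal (Real.exp (-(r*t)) *
      ∑ l ∈ Finset.range n, (r*t) ^ l / Nat.factorial l) := by
  rw [gammaMeasure, withDensity_apply _ measurableSet_Ioi]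
  have h1 : ∀ x ∈ Ioi t, gammaPDF n r x
      = ENNReal.ofReal (r ^ n / Nat.factorial (n-1) * x ^ (n-1) * Real.exp (-(r*x))) := by
    intro x hx
    have hx0 : (0:ℝ) < x := lt_of_le_of_lt ht hx
    rw [gammaPDF_of_nonneg hx0.le]
    congr 1
    rw [Real.rpow_natCast r n,
      show ((n:ℝ) - 1) = ((n - 1 : ℕ) : ℝ) by rw [Nat.cast_sub hn]; push_cast; ring,
      Real.rpow_natCast,
      show ((n:ℕ):ℝ) = ((n-1:ℕ):ℝ) + 1 by rw [Nat.cast_sub hn]; push_cast; ring,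
      Real.Gamma_nat_eq_factorial]
  rw [setLIntegral_congr_fun_ae measurableSet_Ioi (ae_of_all _ h1)]
  have hint : IntegrableOn (fun x : ℝ => r ^ n / Nat.factorial (n-1) * x ^ (n-1)
      * Real.exp (-(r*x))) (Ioi t) := by
    have h := (intOn_pow_exp (k := n-1) hr t).const_mul (r ^ n / (Nat.factorial (n-1) : ℝ))
    simpa [mul_assoc, IntegrableOn] using h
  rw [← ofReal_integral_eq_lintegral_ofReal hint ((ae_restrict_iff' measurableSet_Ioi).mpr
    (ae_of_all _ (fun x hx => by
      have hx0 : (0:ℝ) ≤ x := le_trans ht (le_of_lt hx)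
      positivity)))]
  rw [survival_real hn hr ht]

lemma pointwise_alg (mc k : ℕ) {lamc lame g : ℝ} {y : ℝ} (hy : 0 < y) :
    gammaPDFReal (k+1 : ℕ) lame y * (Real.exp (-(lamc * (g*y+g-1))) *
        ∑ l ∈ Finset.range mc, (lamc * (g*y+g-1)) ^ l / Nat.factorial l)
    = ∑ l ∈ Finset.range mc, ∑ j ∈ Finset.range (l+1),
        (Real.exp (-(lamc * (g-1))) * (lamc ^ l / Nat.factorial l) * (l.choose j : ℝ)
          * (g-1) ^ (l-j) * g ^ j * (lame ^ (k+1) / Nat.factorial k))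
        * (y ^ (j+k) * Real.exp (-((lamc * g + lame) * y))) := by
  have hexp : ∀ l j : ℕ, True := fun _ _ => trivial
  rw [gammaPDFReal, if_pos hy.le]
  rw [Real.rpow_natCast lame (k+1),
    show (((k+1:ℕ)):ℝ) - 1 = ((k:ℕ):ℝ) by push_cast; ring,
    Real.rpow_natCast y k,
    show (((k+1:ℕ)):ℝ) = (k:ℝ) + 1 by push_cast; ring,
    Real.Gamma_nat_eq_factorial k]
  have expand : ∀ l : ℕ, (lamc * (g*y+g-1)) ^ l / (Nat.factorial l : ℝ)
      = ∑ j ∈ Finset.range (l+1),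
          (lamc ^ l / Nat.factorial l) * ((g*y) ^ j * (g-1) ^ (l-j) * (l.choose j : ℝ)) := by
    intro l
    rw [show lamc * (g*y+g-1) = lamc * (g*y + (g-1)) by ring, mul_pow, add_pow,
      Finset.mul_sum, Finset.sum_div]
    apply Finset.sum_congr rfl
    intro j _
    ring
  simp only [expand]
  rw [Finset.mul_sum, Finset.mul_sum]
  apply Finset.sum_congr rfl
  intro l _
  rw [Finset.mul_sum, Finset.mul_sum]
  apply Finset.sum_congr rfl
  intro j _
  have hE : Real.exp (-(lame * y)) * Real.exp (-(lamc * (g*y+g-1)))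
      = Real.exp (-(lamc * (g-1))) * Real.exp (-((lamc * g + lame) * y)) := by
    rw [← Real.exp_add, ← Real.exp_add]
    congr 1
    ring
  linear_combination (lame ^ (k+1) / (Nat.factorial k : ℝ) * y ^ k * (lamc ^ l / Nat.factorial l)
    * ((g*y) ^ j * (g-1) ^ (l-j) * (l.choose j : ℝ))) * hE

/-- For independent `X ~ Gamma(m_c, λ_c)`, `Y ~ Gamma(m_e, λ_e)` with
positive integer shapes and `γ > 1`,
`P(X > γY + γ - 1) = e^{-λ_c(γ-1)} ∑_{l=0}^{m_c-1} ∑_{j=0}^{l} (λ_c^l/l!) C(l,j)(γ-1)^{l-j} γ^j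
  λ_e^{m_e} Γ(j+m_e)/(Γ(m_e)(λ_cγ+λ_e)^{j+m_e})`. -/
theorem prob_gamma_exceeds_shifted_gamma {Ω : Type*} [MeasureSpace Ω]
    [IsProbabilityMeasure (ℙ : Measure Ω)]
    (mc me : ℕ) (hmc : 0 < mc) (hme : 0 < me) (lamc lame : ℝ)
    (hlamc : 0 < lamc) (hlame : 0 < lame)
    (X Y : Ω → ℝ) (hX : Measurable X) (hY : Measurable Y)
    (hindep : IndepFun X Y ℙ)
    (hXdist : Measure.map X ℙ = gammaMeasure mc lamc)
    (hYdist : Measure.map Y ℙ = gammaMeasure me lame)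
    (g : ℝ) (hg : 1 < g) :
    (ℙ {ω | X ω > g * Y ω + g - 1}).toReal =
      Real.exp (-(lamc * (g - 1))) *
        ∑ l ∈ Finset.range mc, ∑ j ∈ Finset.range (l + 1),
          (lamc ^ l / (Nat.factorial l)) * (Nat.choose l j) * (g - 1) ^ (l - j) * g ^ j *
            lame ^ me * (Nat.factorial (j + me - 1)) /
              ((Nat.factorial (me - 1)) * (lamc * g + lame) ^ (j + me)) := by
  obtain ⟨k, rfl⟩ := Nat.exists_eq_succ_of_ne_zero hme.ne'
  have hg0 : (0:ℝ) < g := lt_trans one_pos hg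
  have hg1 : (0:ℝ) ≤ g - 1 := by linarith
  have hcc : (0:ℝ) < lamc * g + lame := by positivity
  have hs : MeasurableSet {p : ℝ × ℝ | g * p.2 + g - 1 < p.1} :=
    measurableSet_lt (by fun_prop) (by fun_prop)
  have hmap : Measure.map (fun ω => (X ω, Y ω)) ℙ
      = (gammaMeasure mc lamc).prod (gammaMeasure (k+1 : ℕ) lame) := by
    rw [← hXdist, ← hYdist]
    exact (ProbabilityTheory.indepFun_iff_map_prod_eq_prod_map_map
      hX.aemeasurable hY.aemeasurable).mp hindep
  haveI hpc : IsProbabilityMeasure (gammaMeasure (mc : ℝ) lamc) :=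
    isProbabilityMeasure_gammaMeasure (by positivity) hlamc
  haveI hpe : IsProbabilityMeasure (gammaMeasure ((k+1 : ℕ) : ℝ) lame) :=
    isProbabilityMeasure_gammaMeasure (by positivity) hlame
  have hmeasF : Measurable (fun y : ℝ => gammaMeasure (mc : ℝ) lamc (Ioi (g*y+g-1))) := by
    have hanti : Antitone (fun t : ℝ => gammaMeasure (mc : ℝ) lamc (Ioi t)) :=
      fun a b hab => measure_mono (Ioi_subset_Ioi hab)
    exact hanti.measurable.comp (by fun_prop)
  have hP1 : ℙ {ω | X ω > g * Y ω + g - 1}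
      = ∫⁻ y, gammaPDF (k+1 : ℕ) lame y * gammaMeasure (mc : ℝ) lamc (Ioi (g*y+g-1)) := by
    have e1 : ℙ {ω | X ω > g * Y ω + g - 1}
        = Measure.map (fun ω => (X ω, Y ω)) ℙ {p : ℝ × ℝ | g * p.2 + g - 1 < p.1} := by
      rw [Measure.map_apply (hX.prodMk hY) hs]
      rfl
    rw [e1, hmap, Measure.prod_apply_symm hs]
    have e2 : ∀ y : ℝ, ((fun x => (x, y)) ⁻¹' {p : ℝ × ℝ | g * p.2 + g - 1 < p.1})
        = Ioi (g*y+g-1) := fun y => rfl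
    simp only [e2]
    rw [show gammaMeasure ((k+1 : ℕ) : ℝ) lame
        = volume.withDensity (gammaPDF (k+1 : ℕ) lame) from rfl]
    rw [lintegral_withDensity_eq_lintegral_mul _
      (by exact (measurable_gammaPDFReal _ _).ennreal_ofReal :
        Measurable (gammaPDF ((k+1:ℕ):ℝ) lame)) hmeasF]
    rfl
  -- split integral at 0
  have hsplit : ∫⁻ y, gammaPDF (k+1 : ℕ) lame y * gammaMeasure (mc : ℝ) lamc (Ioi (g*y+g-1))
      = ∫⁻ y in Ioi (0:ℝ),
          gammaPDF (k+1 : ℕ) lame y * gammaMeasure (mc : ℝ) lamc (Ioi (g*y+g-1)) := by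
    rw [← lintegral_add_compl (fun y => gammaPDF (k+1 : ℕ) lame y
        * gammaMeasure (mc : ℝ) lamc (Ioi (g*y+g-1))) measurableSet_Iic (μ := volume)]
    rw [compl_Iic]
    have hzero : ∫⁻ y in Iic (0:ℝ), gammaPDF (k+1 : ℕ) lame y
        * gammaMeasure (mc : ℝ) lamc (Ioi (g*y+g-1)) = 0 := by
      rw [setLIntegral_congr (Iio_ae_eq_Iic (a := (0:ℝ))).symm]
      rw [setLIntegral_congr_fun_ae measurableSet_Iio (ae_of_all _
        (fun y (hy : y < 0) => by rw [gammaPDF_of_neg hy, zero_mul]))]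
      simp
    rw [hzero, zero_add]
  -- pointwise identity on Ioi 0
  have hpt : ∀ y ∈ Ioi (0:ℝ),
      gammaPDF (k+1 : ℕ) lame y * gammaMeasure (mc : ℝ) lamc (Ioi (g*y+g-1))
      = ENNReal.ofReal (∑ l ∈ Finset.range mc, ∑ j ∈ Finset.range (l+1),
          (Real.exp (-(lamc * (g-1))) * (lamc ^ l / Nat.factorial l) * (l.choose j : ℝ)
            * (g-1) ^ (l-j) * g ^ j * (lame ^ (k+1) / Nat.factorial k))
          * (y ^ (j+k) * Real.exp (-((lamc * g + lame) * y)))) := by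
    intro y hy
    have hy0 : (0:ℝ) < y := hy
    have ht : (0:ℝ) ≤ g*y+g-1 := by nlinarith
    rw [survival_measure hmc hlamc ht,
      show gammaPDF ((k+1:ℕ):ℝ) lame y = ENNReal.ofReal (gammaPDFReal (k+1:ℕ) lame y) from rfl,
      ← ENNReal.ofReal_mul (gammaPDFReal_nonneg (by positivity) hlame y),
      pointwise_alg mc k hy0]
  rw [hP1, hsplit, setLIntegral_congr_fun_ae measurableSet_Ioi (ae_of_all _ hpt)]
  have hGint : IntegrableOn (fun y : ℝ => ∑ l ∈ Finset.range mc, ∑ j ∈ Finset.range (l+1),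
      (Real.exp (-(lamc * (g-1))) * (lamc ^ l / Nat.factorial l) * (l.choose j : ℝ)
        * (g-1) ^ (l-j) * g ^ j * (lame ^ (k+1) / Nat.factorial k))
      * (y ^ (j+k) * Real.exp (-((lamc * g + lame) * y)))) (Ioi 0) :=
    integrable_finset_sum _ (fun l _ => integrable_finset_sum _ (fun j _ =>
      (intOn_pow_exp hcc 0).const_mul _))
  have hGnn : 0 ≤ᵐ[volume.restrict (Ioi (0:ℝ))]
      (fun y : ℝ => ∑ l ∈ Finset.range mc, ∑ j ∈ Finset.range (l+1),
      (Real.exp (-(lamc * (g-1))) * (lamc ^ l / Nat.factorial l) * (l.choose j : ℝ)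
        * (g-1) ^ (l-j) * g ^ j * (lame ^ (k+1) / Nat.factorial k))
      * (y ^ (j+k) * Real.exp (-((lamc * g + lame) * y)))) :=
    (ae_restrict_iff' measurableSet_Ioi).mpr (ae_of_all _ (fun y hy => by
      have hy0 : (0:ℝ) ≤ y := le_of_lt hy
      apply Finset.sum_nonneg; intro l _
      apply Finset.sum_nonneg; intro j _
      positivity))
  rw [← ofReal_integral_eq_lintegral_ofReal hGint hGnn]
  have hI : (∫ y in Ioi (0:ℝ), ∑ l ∈ Finset.range mc, ∑ j ∈ Finset.range (l+1),
      (Real.exp (-(lamc * (g-1))) * (lamc ^ l / Nat.factorial l) * (l.choose j : ℝ)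
        * (g-1) ^ (l-j) * g ^ j * (lame ^ (k+1) / Nat.factorial k))
      * (y ^ (j+k) * Real.exp (-((lamc * g + lame) * y))))
      = ∑ l ∈ Finset.range mc, ∑ j ∈ Finset.range (l+1),
        (Real.exp (-(lamc * (g-1))) * (lamc ^ l / Nat.factorial l) * (l.choose j : ℝ)
          * (g-1) ^ (l-j) * g ^ j * (lame ^ (k+1) / Nat.factorial k))
        * (Nat.factorial (j+k) / (lamc * g + lame) ^ (j+k+1)) := by
    rw [integral_finset_sum _ (fun l _ => integrable_finset_sum _ (fun j _ =>
      (intOn_pow_exp hcc 0).const_mul _))]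
    apply Finset.sum_congr rfl
    intro l _
    rw [integral_finset_sum _ (fun j _ => (intOn_pow_exp hcc 0).const_mul _)]
    apply Finset.sum_congr rfl
    intro j _
    rw [integral_const_mul, lap_int (j+k) hcc]
  rw [hI, ENNReal.toReal_ofReal (by
    apply Finset.sum_nonneg; intro l _
    apply Finset.sum_nonneg; intro j _
    positivity)]
  rw [Finset.mul_sum]
  apply Finset.sum_congr rfl
  intro l _
  rw [Finset.mul_sum]
  apply Finset.sum_congr rfl
  intro j _
  have e1 : j + (k+1) - 1 = j + k := by omega
  have e2 : j + (k+1) = j + k + 1 := by omega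
  have e0 : k + 1 - 1 = k := by omega
  rw [e1, e2, e0]
  have hl : (Nat.factorial l : ℝ) ≠ 0 := Nat.cast_ne_zero.mpr (Nat.factorial_ne_zero l)
  have hk : (Nat.factorial k : ℝ) ≠ 0 := Nat.cast_ne_zero.mpr (Nat.factorial_ne_zero k)
  have hccp : ((lamc * g + lame) ^ (j+k+1) : ℝ) ≠ 0 := by positivity
  field_simp
end
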